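/- arXiv:1202.0668 — 2 statements merged into one kernel-verified Lean document; each statement's English description precedes it below -/
import Mathlib

section
/- If 0 ≤ q ≤ n and 0 ≤ k ≤ n − q, the polynomial f_{k,p,q} = Σ_{s=0}^k a_s r^{2k-2s} θ^{2s} with a_s = C(k,s)·((n−q−s)!/Γ(m/2+p+k−s))·(Γ(m/2+p+k)/(n−q−k)!) satisfies ∇²(f_{k,p,q} H_p^b H_q^f) = 0 for any bosonic harmonic H_p^b of degree p and fermionic harmonic H_q^f of degree q. -/
open scoped TensorProduct
open MvPolynomial
set_option synthInstance.maxHeartbeats 1000000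
set_option maxHeartbeats 1000000

noncomputable section

/-- The Grassmann algebra on `N` anticommuting generators, modelled as the
exterior algebra of `ℝ^N`. -/
abbrev GrassAlg (N : ℕ) : Type _ := ExteriorAlgebra ℝ (Fin N → ℝ)

/-- The Grassmann generators `x'_j`. -/
def gGen {N : ℕ} (j : Fin N) : GrassAlg N := ExteriorAlgebra.ι ℝ (Pi.single j 1)

/-- The (left) Grassmann derivative `∂_{x'_j}`, an odd derivation of the Grassmann
algebra, realized as left contraction with the `j`-th dual basis vector. -/
def gDer {N : ℕ} (j : Fin N) : GrassAlg N →ₗ[ℝ] GrassAlg N :=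
  CliffordAlgebra.contractLeft (LinearMap.proj j)

/-- The index `2j-1` (1-based), i.e. `2j` (0-based). -/
def fi1 {n : ℕ} (j : Fin n) : Fin (2 * n) := ⟨2 * j.1, by have := j.isLt; omega⟩

/-- The index `2j` (1-based), i.e. `2j+1` (0-based). -/
def fi2 {n : ℕ} (j : Fin n) : Fin (2 * n) := ⟨2 * j.1 + 1, by have := j.isLt; omega⟩

/-- `θ² = - Σ_j x'_{2j-1} x'_{2j}`. -/
def thetaSq (n : ℕ) : GrassAlg (2 * n) :=
  - ∑ j : Fin n, gGen (fi1 j) * gGen (fi2 j)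

/-- The fermionic Laplacian `∇²_f = -4 Σ_j ∂_{x'_{2j-1}} ∂_{x'_{2j}}`. -/
def fLap (n : ℕ) : Module.End ℝ (GrassAlg (2 * n)) :=
  -(4 : ℝ) • ∑ j : Fin n, gDer (fi1 j) * gDer (fi2 j)

/-- The fermionic Euler operator `𝔼_f = Σ_j x'_j ∂_{x'_j}`. -/
def fEuler (N : ℕ) : Module.End ℝ (GrassAlg N) :=
  ∑ j : Fin N, LinearMap.mulLeft ℝ (gGen j) * gDer j

/-- Fermionic spherical harmonics of degree `k`. -/
def fHarm (n k : ℕ) : Submodule ℝ (GrassAlg (2 * n)) :=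
  Module.End.eigenspace (fEuler (2 * n)) (k : ℝ) ⊓ LinearMap.ker (fLap n)

/-- The algebra of super polynomials `P = ℝ[x_1,…,x_m] ⊗ Λ_{2n}`. -/
abbrev SP (m n : ℕ) : Type _ := MvPolynomial (Fin m) ℝ ⊗[ℝ] GrassAlg (2 * n)

variable (m n : ℕ)

/-- Multiplication by the bosonic variable `x_i`. -/
def bvar (i : Fin m) : Module.End ℝ (SP m n) :=
  LinearMap.rTensor _ (LinearMap.mulLeft ℝ (X i))

/-- The bosonic derivative `∂_{x_i}`. -/
def bder (i : Fin m) : Module.End ℝ (SP m n) :=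
  LinearMap.rTensor _ (pderiv i).toLinearMap

/-- Multiplication by the fermionic variable `x'_j`. -/
def fvar (j : Fin (2 * n)) : Module.End ℝ (SP m n) :=
  LinearMap.lTensor _ (LinearMap.mulLeft ℝ (gGen j))

/-- The fermionic derivative `∂_{x'_j}` on super polynomials. -/
def fderSP (j : Fin (2 * n)) : Module.End ℝ (SP m n) :=
  LinearMap.lTensor _ (gDer j)

/-- The super Laplace operator `∇² = Σ_i ∂²_{x_i} - 4 Σ_j ∂_{x'_{2j-1}} ∂_{x'_{2j}}`. -/
def superLap : Module.End ℝ (SP m n) :=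
  ∑ i : Fin m, bder m n i * bder m n i
    - (4 : ℝ) • ∑ j : Fin n, fderSP m n (fi1 j) * fderSP m n (fi2 j)

/-- The super Euler operator `𝔼 = Σ_i x_i ∂_{x_i} + Σ_j x'_j ∂_{x'_j}`. -/
def superEuler : Module.End ℝ (SP m n) :=
  ∑ i : Fin m, bvar m n i * bder m n i + ∑ j : Fin (2 * n), fvar m n j * fderSP m n j

/-- The generalized norm squared `R² = Σ_i x_i² - Σ_j x'_{2j-1} x'_{2j}`. -/
def rSq : SP m n := (∑ i : Fin m, X i * X i) ⊗ₜ[ℝ] 1 + 1 ⊗ₜ[ℝ] thetaSq n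

/-- Multiplication by `R²`. -/
def mulRSq : Module.End ℝ (SP m n) := LinearMap.mulLeft ℝ (rSq m n)

/-- Super polynomials of homogeneous degree `k` (eigenspace of the Euler operator). -/
def Pdeg (k : ℕ) : Submodule ℝ (SP m n) :=
  Module.End.eigenspace (superEuler m n) (k : ℝ)

/-- Spherical harmonics of degree `k`: degree-`k` null-solutions of `∇²`. -/
def Harm (k : ℕ) : Submodule ℝ (SP m n) :=
  Pdeg m n k ⊓ LinearMap.ker (superLap m n)

/-- Evaluation at the origin: the scalar part of a super polynomial. -/
def scalarPart : SP m n →ₐ[ℝ] ℝ :=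
  Algebra.TensorProduct.productMap (aeval fun _ => (0 : ℝ)) ExteriorAlgebra.algebraMapInv

/-- Parity `[i]` of the super coordinates: `0` for bosonic, `1` for fermionic. -/
def par (i : Fin (m + 2 * n)) : ℕ := if i.1 < m then 0 else 1

/-- The orthosymplectic metric `g^{ij}` (identity bosonic block, `J`-type fermionic
block with entries `∓ 1/2`). -/
def gUp (i j : Fin (m + 2 * n)) : ℝ :=
  if i.1 < m ∧ j.1 < m then (if i = j then 1 else 0)
  else if m ≤ i.1 ∧ j.1 = i.1 + 1 ∧ (i.1 - m) % 2 = 0 then -(1 / 2)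
  else if m ≤ j.1 ∧ i.1 = j.1 + 1 ∧ (j.1 - m) % 2 = 0 then 1 / 2
  else 0

/-- The inverse orthosymplectic metric `g_{ij}`. -/
def gDown (i j : Fin (m + 2 * n)) : ℝ :=
  if i.1 < m ∧ j.1 < m then (if i = j then 1 else 0)
  else if m ≤ i.1 ∧ j.1 = i.1 + 1 ∧ (i.1 - m) % 2 = 0 then 2
  else if m ≤ j.1 ∧ i.1 = j.1 + 1 ∧ (j.1 - m) % 2 = 0 then -2
  else 0

/-- Multiplication by the super coordinate `X_i`. -/
def svar (i : Fin (m + 2 * n)) : Module.End ℝ (SP m n) :=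
  if h : i.1 < m then bvar m n ⟨i.1, h⟩
  else fvar m n ⟨i.1 - m, by have := i.isLt; omega⟩

/-- The super derivative `∂_{X_i}`. -/
def sder (i : Fin (m + 2 * n)) : Module.End ℝ (SP m n) :=
  if h : i.1 < m then bder m n ⟨i.1, h⟩
  else fderSP m n ⟨i.1 - m, by have := i.isLt; omega⟩

/-- The raised super derivative `∂_{X^j}`. -/
def sderUp (j : Fin (m + 2 * n)) : Module.End ℝ (SP m n) :=
  ∑ k : Fin (m + 2 * n), gDown m n j k • sder m n k

/-- The `osp(m|2n)` generators `L_{ij} = X_i ∂_{X^j} - (-1)^{[i][j]} X_j ∂_{X^i}`. -/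
def Lgen (i j : Fin (m + 2 * n)) : Module.End ℝ (SP m n) :=
  svar m n i * sderUp m n j
    - ((-1 : ℝ) ^ (par m n i * par m n j)) • (svar m n j * sderUp m n i)

/-- The Laplace–Beltrami operator `Δ_LB = R²∇² - 𝔼(M - 2 + 𝔼)`. -/
def lapBeltrami : Module.End ℝ (SP m n) :=
  mulRSq m n * superLap m n
    - superEuler m n *
        ((((m : ℝ) - 2 * n) - 2) • (1 : Module.End ℝ (SP m n)) + superEuler m n)

/-- The bosonic Laplacian on ordinary polynomials. -/
def bLap : Module.End ℝ (MvPolynomial (Fin m) ℝ) :=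
  ∑ i : Fin m, (pderiv i).toLinearMap * (pderiv i).toLinearMap

/-- The polynomial `f_{k,p,q} = Σ_s a_s r^{2k-2s} θ^{2s}` of Lemma `polythm`. -/
def fpoly (m n k p q : ℕ) : SP m n :=
  ∑ s ∈ Finset.range (k + 1),
    ((k.choose s : ℝ) *
        (((n - q - s).factorial : ℝ) / Real.Gamma ((m : ℝ) / 2 + p + k - s)) *
        (Real.Gamma ((m : ℝ) / 2 + p + k) / ((n - q - k).factorial : ℝ))) •
      ((((∑ i : Fin m, X i * X i) ⊗ₜ[ℝ] (1 : GrassAlg (2 * n))) ^ (k - s)) *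
        (((1 : MvPolynomial (Fin m) ℝ) ⊗ₜ[ℝ] thetaSq n) ^ s))


/-! ### Auxiliary lemmas -/

set_option linter.unnecessarySeqFocus false

lemma gDer_gGen_mul {N : ℕ} (j c : Fin N) (x : GrassAlg N) :
    gDer j (gGen c * x) = (if c = j then x else 0) - gGen c * gDer j x := by
  unfold gGen gDer ExteriorAlgebra.ι
  rw [CliffordAlgebra.contractLeft_ι_mul]
  have : (LinearMap.proj j : (Fin N → ℝ) →ₗ[ℝ] ℝ) (Pi.single c 1) = if c = j then 1 else 0 := by
    simp [LinearMap.proj, Pi.single_apply, eq_comm]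
  rw [this]
  split <;> simp

lemma gGen_anticomm {N : ℕ} (a b : Fin N) (x : GrassAlg N) :
    gGen a * (gGen b * x) = - (gGen b * (gGen a * x)) := by
  have h := ExteriorAlgebra.ι_add_mul_swap (R := ℝ) (M := Fin N → ℝ) (Pi.single a 1) (Pi.single b 1)
  have h2 : gGen a * gGen b = -(gGen b * gGen a) := by
    have : gGen a * gGen b + gGen b * gGen a = 0 := h
    exact eq_neg_of_add_eq_zero_left this
  rw [← mul_assoc, ← mul_assoc, h2, neg_mul]

/-- `t_l = x'_{2l-1} x'_{2l}`. -/
def tpair {n : ℕ} (l : Fin n) : GrassAlg (2 * n) := gGen (fi1 l) * gGen (fi2 l)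

lemma fi1_inj {n : ℕ} {j l : Fin n} : fi1 j = fi1 l ↔ j = l := by
  constructor
  · intro h; have := congrArg Fin.val h; simp [fi1] at this; exact Fin.ext (by omega)
  · rintro rfl; rfl

lemma fi2_inj {n : ℕ} {j l : Fin n} : fi2 j = fi2 l ↔ j = l := by
  constructor
  · intro h; have := congrArg Fin.val h; simp [fi2] at this; exact Fin.ext (by omega)
  · rintro rfl; rfl

lemma fi1_ne_fi2 {n : ℕ} (j l : Fin n) : fi1 j ≠ fi2 l := by
  intro h; have := congrArg Fin.val h; simp [fi1, fi2] at this; omega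

lemma gDer_tpair_mul {n : ℕ} (c : Fin (2*n)) (l : Fin n) (x : GrassAlg (2*n)) :
    gDer c (tpair l * x) =
      (if fi1 l = c then gGen (fi2 l) * x else 0)
        - (if fi2 l = c then gGen (fi1 l) * x else 0)
        + tpair l * gDer c x := by
  rw [tpair, mul_assoc, gDer_gGen_mul, gDer_gGen_mul, mul_sub, mul_assoc]
  split <;> split <;> noncomm_ring

lemma tpair_comm {n : ℕ} (l : Fin n) (c : Fin (2*n)) (y : GrassAlg (2*n)) :
    gGen c * (tpair l * y) = tpair l * (gGen c * y) := by
  rw [tpair, mul_assoc, gGen_anticomm, gGen_anticomm c, mul_neg, neg_neg, mul_assoc]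

lemma D_tpair {n : ℕ} (j l : Fin n) (x : GrassAlg (2*n)) :
    gDer (fi1 j) (gDer (fi2 j) (tpair l * x)) =
      (if l = j then
        (- x + gGen (fi1 j) * gDer (fi1 j) x + gGen (fi2 j) * gDer (fi2 j) x) else 0)
      + tpair l * gDer (fi1 j) (gDer (fi2 j) x) := by
  rw [gDer_tpair_mul, if_neg (fi1_ne_fi2 l j)]
  by_cases h : l = j
  · subst h
    rw [if_pos rfl, if_pos rfl, zero_sub, map_add, map_neg, gDer_gGen_mul, if_pos rfl,
      gDer_tpair_mul, if_pos rfl, if_neg (fi1_ne_fi2 l l).symm]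
    noncomm_ring
  · rw [if_neg (fun hh => h (fi2_inj.mp hh)), if_neg h, zero_sub, neg_zero, zero_add,
      gDer_tpair_mul, if_neg (fun hh => h (fi1_inj.mp hh)), if_neg (fi1_ne_fi2 j l).symm]
    noncomm_ring

def pairEquiv (n : ℕ) : Fin n × Bool ≃ Fin (2*n) where
  toFun x := ⟨2*x.1.1 + cond x.2 1 0, by rcases x with ⟨⟨j,hj⟩,b⟩; cases b <;> simp <;> omega⟩
  invFun c := (⟨c.1/2, by have := c.isLt; omega⟩, decide (c.1 % 2 = 1))
  left_inv := by
    rintro ⟨⟨j,hj⟩,b⟩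
    cases b <;> refine Prod.ext (Fin.ext ?_) ?_ <;> simp <;> omega
  right_inv := by
    rintro ⟨c,hc⟩
    refine Fin.ext ?_
    simp only
    rcases Nat.mod_two_eq_zero_or_one c with h | h <;> simp [h] <;> omega

lemma sum_pairs {M : Type*} [AddCommMonoid M] (n : ℕ) (h : Fin (2*n) → M) :
    ∑ c, h c = ∑ j : Fin n, (h (fi1 j) + h (fi2 j)) := by
  rw [← Equiv.sum_comp (pairEquiv n) h, Fintype.sum_prod_type]
  refine Finset.sum_congr rfl fun j _ => ?_
  rw [Fintype.sum_bool]
  have h1 : pairEquiv n (j, false) = fi1 j := Fin.ext (by simp [pairEquiv, fi1])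
  have h2 : pairEquiv n (j, true) = fi2 j := Fin.ext (by simp [pairEquiv, fi2])
  rw [h1, h2, add_comm]

lemma thetaSq_mul {n : ℕ} (x : GrassAlg (2*n)) :
    thetaSq n * x = - ∑ l : Fin n, tpair l * x := by
  rw [thetaSq, neg_mul, Finset.sum_mul]
  rfl

lemma fEuler_tpair {n : ℕ} (l : Fin n) (x : GrassAlg (2*n)) :
    fEuler (2*n) (tpair l * x) = (2:ℝ) • (tpair l * x) + tpair l * fEuler (2*n) x := by
  simp only [fEuler, LinearMap.sum_apply, Module.End.mul_apply, LinearMap.mulLeft_apply,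
    gDer_tpair_mul, mul_add, mul_sub, mul_ite, mul_zero, tpair_comm,
    Finset.sum_add_distrib, Finset.sum_sub_distrib, Finset.sum_ite_eq, Finset.mem_univ,
    if_true, ← Finset.mul_sum]
  rw [gGen_anticomm (fi2 l) (fi1 l) x]
  rw [two_smul, tpair, mul_assoc]
  noncomm_ring

lemma fEuler_thetaSq_mul {n : ℕ} (x : GrassAlg (2*n)) :
    fEuler (2*n) (thetaSq n * x)
      = thetaSq n * fEuler (2*n) x + (2:ℝ) • (thetaSq n * x) := by
  rw [thetaSq_mul, map_neg, map_sum]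
  simp only [fEuler_tpair]
  simp only [thetaSq_mul, Finset.sum_add_distrib, ← Finset.smul_sum]
  module

lemma fLap_thetaSq_mul {n : ℕ} (x : GrassAlg (2*n)) :
    fLap n (thetaSq n * x)
      = thetaSq n * fLap n x + (4:ℝ) • fEuler (2*n) x - ((4*n : ℝ)) • x := by
  have hfe : fEuler (2*n) x
      = ∑ j : Fin n, (gGen (fi1 j) * gDer (fi1 j) x + gGen (fi2 j) * gDer (fi2 j) x) := by
    rw [fEuler, LinearMap.sum_apply]
    simp only [Module.End.mul_apply, LinearMap.mulLeft_apply]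
    exact sum_pairs n _
  have hsum : ∀ j : Fin n, gDer (fi1 j) (gDer (fi2 j) (thetaSq n * x)) =
      -(- x + gGen (fi1 j) * gDer (fi1 j) x + gGen (fi2 j) * gDer (fi2 j) x)
        - (∑ l : Fin n, tpair l) * gDer (fi1 j) (gDer (fi2 j) x) := by
    intro j
    rw [thetaSq_mul, map_neg, map_neg, map_sum, map_sum]
    simp only [D_tpair]
    rw [Finset.sum_add_distrib, Finset.sum_ite_eq', Finset.sum_mul]
    simp only [Finset.mem_univ, if_true]
    noncomm_ring
  have hsum2 : ∑ j : Fin n, gDer (fi1 j) (gDer (fi2 j) (thetaSq n * x))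
      = ((n : ℕ) • x - fEuler (2*n) x)
        - (∑ l : Fin n, tpair l) * (∑ j : Fin n, gDer (fi1 j) (gDer (fi2 j) x)) := by
    simp only [hsum]
    rw [Finset.sum_sub_distrib, ← Finset.mul_sum]
    congr 1
    rw [hfe]
    rw [Finset.sum_congr rfl (fun j _ => by noncomm_ring :
      ∀ j ∈ Finset.univ, -(- x + gGen (fi1 j) * gDer (fi1 j) x + gGen (fi2 j) * gDer (fi2 j) x)
        = x - (gGen (fi1 j) * gDer (fi1 j) x + gGen (fi2 j) * gDer (fi2 j) x))]
    rw [Finset.sum_sub_distrib, Finset.sum_const, Finset.card_univ, Fintype.card_fin]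
  have hfl : thetaSq n * fLap n x
      = (4:ℝ) • ((∑ l : Fin n, tpair l) * ∑ j : Fin n, gDer (fi1 j) (gDer (fi2 j) x)) := by
    rw [fLap, LinearMap.smul_apply, LinearMap.sum_apply]
    simp only [Module.End.mul_apply]
    show (-(∑ l : Fin n, tpair l)) * _ = _
    rw [mul_smul_comm, neg_mul]
    module
  rw [hfl, fLap, LinearMap.smul_apply, LinearMap.sum_apply]
  simp only [Module.End.mul_apply]
  rw [hsum2, ← Nat.cast_smul_eq_nsmul ℝ]
  module

lemma fEuler_theta_pow {n q : ℕ} (Hf : GrassAlg (2*n))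
    (hq : fEuler (2*n) Hf = (q : ℝ) • Hf) (b : ℕ) :
    fEuler (2*n) (thetaSq n ^ b * Hf) = ((2*b + q : ℝ)) • (thetaSq n ^ b * Hf) := by
  induction b with
  | zero => simpa using hq
  | succ b ih =>
    rw [pow_succ', mul_assoc, fEuler_thetaSq_mul, ih, mul_smul_comm, ← mul_assoc,
      ← pow_succ']
    push_cast
    module

lemma fLap_theta_pow {n q : ℕ} (Hf : GrassAlg (2*n))
    (hq : fEuler (2*n) Hf = (q : ℝ) • Hf) (hl : fLap n Hf = 0) (b : ℕ) :
    fLap n (thetaSq n ^ b * Hf)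
      = (4*b*((q:ℝ) - n - 1 + b)) • (thetaSq n ^ (b-1) * Hf) := by
  induction b with
  | zero => simpa using hl
  | succ b ih =>
    rw [pow_succ', mul_assoc, fLap_thetaSq_mul, ih, fEuler_theta_pow Hf hq]
    rcases Nat.eq_zero_or_pos b with rfl | hb
    · simp only [pow_zero, one_mul, Nat.zero_sub, Nat.add_sub_cancel, Nat.cast_zero,
        mul_zero, zero_mul, zero_smul, smul_zero, Nat.cast_ofNat, Nat.cast_one]
      push_cast
      match_scalars <;> ring
    · rw [mul_smul_comm, ← mul_assoc, ← pow_succ']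
      have hb1 : b - 1 + 1 = b := Nat.succ_pred_eq_of_pos hb
      rw [hb1]
      have : (b : ℝ) + 1 - 1 = b := by ring
      rw [Nat.add_sub_cancel]
      push_cast
      match_scalars <;> ring

def bRR (m : ℕ) : MvPolynomial (Fin m) ℝ := ∑ i : Fin m, X i * X i

lemma euler_monomial {m : ℕ} (d : Fin m →₀ ℕ) (c : ℝ) :
    ∑ i : Fin m, X i * pderiv i (monomial d c) = (d.degree : ℝ) • monomial d c := by
  have hterm : ∀ i : Fin m, X i * pderiv i (monomial d c)
      = ((d i : ℝ)) • monomial d c := by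
    intro i
    rw [pderiv_monomial]
    rcases Nat.eq_zero_or_pos (d i) with h | h
    · simp [h]
    · have hd : d - Finsupp.single i 1 + Finsupp.single i 1 = d := by
        ext a
        simp only [Finsupp.add_apply, Finsupp.tsub_apply, Finsupp.single_apply]
        by_cases ha : i = a
        · subst ha; simp; omega
        · simp [ha]
      rw [X, monomial_mul, one_mul, add_comm, hd, smul_monomial, smul_eq_mul, mul_comm]
    -- handle remaining
  rw [Finset.sum_congr rfl (fun i _ => hterm i), ← Finset.sum_smul]
  congr 1
  have : d.degree = ∑ i : Fin m, d i :=
    (Finset.sum_subset (Finset.subset_univ _)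
      (fun x _ hx => Finsupp.notMem_support_iff.mp hx))
  rw [this]
  push_cast
  rfl

lemma euler_hom {m p : ℕ} {f : MvPolynomial (Fin m) ℝ} (hf : f.IsHomogeneous p) :
    ∑ i : Fin m, X i * pderiv i f = (p : ℝ) • f := by
  conv_lhs => rw [f.as_sum]
  conv_rhs => rw [f.as_sum]
  simp only [map_sum, Finset.mul_sum, Finset.smul_sum]
  rw [Finset.sum_comm]
  refine Finset.sum_congr rfl fun d hd => ?_
  have hdeg : d.degree = p := by
    by_contra h
    exact (mem_support_iff.mp hd) (hf.coeff_eq_zero h)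
  rw [euler_monomial, hdeg]

lemma pderiv_bRR {m : ℕ} (i : Fin m) : pderiv i (bRR m) = C 2 * X i := by
  rw [bRR, map_sum]
  rw [Finset.sum_eq_single i]
  · rw [pderiv_mul, pderiv_X_self]
    rw [map_ofNat]; ring
  · intro j _ hj
    simp [pderiv_mul, hj]
  · intro h; exact absurd (Finset.mem_univ i) h

lemma bLap_apply {m : ℕ} (f : MvPolynomial (Fin m) ℝ) :
    bLap m f = ∑ i : Fin m, pderiv i (pderiv i f) := by
  rw [bLap, LinearMap.sum_apply]; rfl

lemma bLap_bRR_mul {m : ℕ} (f : MvPolynomial (Fin m) ℝ) :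
    bLap m (bRR m * f)
      = bRR m * bLap m f + ((2*m : ℝ)) • f + (4:ℝ) • ∑ i : Fin m, X i * pderiv i f := by
  simp only [bLap_apply, smul_eq_C_mul]
  have : ∀ i : Fin m, pderiv i (pderiv i (bRR m * f))
      = C 2 * f + C 4 * (X i * pderiv i f) + bRR m * pderiv i (pderiv i f) := by
    intro i
    have h2 : pderiv i (2 : MvPolynomial (Fin m) ℝ) = 0 := by
      rw [← map_ofNat (C : ℝ →+* MvPolynomial (Fin m) ℝ) 2, pderiv_C]
    simp only [pderiv_mul, pderiv_bRR, pderiv_C, pderiv_X_self, map_add, map_ofNat, h2]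
    ring
  rw [Finset.sum_congr rfl (fun i _ => this i)]
  rw [Finset.sum_add_distrib, Finset.sum_add_distrib, Finset.sum_const, Finset.card_univ,
    Fintype.card_fin, ← Finset.mul_sum, ← Finset.mul_sum, nsmul_eq_mul]
  rw [(by rw [mul_comm, map_mul] : (C (2 * (m:ℝ)) : MvPolynomial (Fin m) ℝ) = C (m:ℝ) * C 2),
    (by exact map_natCast C m : (C ((m:ℕ):ℝ) : MvPolynomial (Fin m) ℝ) = ((m:ℕ) : MvPolynomial (Fin m) ℝ)),
    map_ofNat, map_ofNat]
  ring

lemma bRR_hom {m : ℕ} : (bRR m).IsHomogeneous 2 :=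
  IsHomogeneous.sum _ _ _ fun i _ => by
    simpa using (isHomogeneous_X ℝ i).mul (isHomogeneous_X ℝ i)

lemma bLap_bRR_pow {m p : ℕ} {Hb : MvPolynomial (Fin m) ℝ} (hHb : Hb.IsHomogeneous p)
    (hharm : bLap m Hb = 0) (a : ℕ) :
    bLap m (bRR m ^ a * Hb)
      = (2*a*(2*a+2*p+(m:ℝ)-2)) • (bRR m ^ (a-1) * Hb) := by
  induction a with
  | zero => simpa using hharm
  | succ a ih =>
    have heuler : ∑ i : Fin m, X i * pderiv i (bRR m ^ a * Hb)
        = ((2*a+p : ℕ) : ℝ) • (bRR m ^ a * Hb) :=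
      euler_hom (by simpa [mul_comm 2 a] using (bRR_hom.pow a).mul hHb)
    rw [pow_succ', mul_assoc, bLap_bRR_mul, ih, heuler, Nat.add_sub_cancel]
    rcases Nat.eq_zero_or_pos a with rfl | ha
    · simp only [pow_zero, one_mul, Nat.zero_sub, zero_add, Nat.cast_zero, mul_zero,
        zero_mul, zero_smul, smul_zero, Nat.add_sub_cancel]
      push_cast
      match_scalars <;> ring
    · have hb1 : a - 1 + 1 = a := Nat.succ_pred_eq_of_pos ha
      rw [mul_smul_comm, ← mul_assoc, ← pow_succ', hb1]
      push_cast
      match_scalars <;> ring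


lemma superLap_tmul (m n : ℕ) (P : MvPolynomial (Fin m) ℝ) (G : GrassAlg (2 * n)) :
    superLap m n (P ⊗ₜ[ℝ] G) = (bLap m P) ⊗ₜ[ℝ] G + P ⊗ₜ[ℝ] (fLap n G) := by
  rw [superLap, bLap, fLap]
  simp only [LinearMap.sub_apply, LinearMap.sum_apply, LinearMap.smul_apply,
    Module.End.mul_apply, bder, fderSP, LinearMap.rTensor_tmul, LinearMap.lTensor_tmul,
    AlgHom.toLinearMap_apply]
  rw [TensorProduct.sum_tmul, TensorProduct.tmul_smul, TensorProduct.tmul_sum]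
  module

lemma hT_mul (m n : ℕ) (Hb : MvPolynomial (Fin m) ℝ) (Hf : GrassAlg (2 * n)) (a b : ℕ) :
    ((bRR m ⊗ₜ[ℝ] (1 : GrassAlg (2 * n))) ^ a)
        * (((1 : MvPolynomial (Fin m) ℝ) ⊗ₜ[ℝ] thetaSq n) ^ b) * (Hb ⊗ₜ[ℝ] Hf)
      = (bRR m ^ a * Hb) ⊗ₜ[ℝ] (thetaSq n ^ b * Hf) := by
  rw [Algebra.TensorProduct.tmul_pow, Algebra.TensorProduct.tmul_pow, one_pow, one_pow,
    Algebra.TensorProduct.tmul_mul_tmul, one_mul, mul_one,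
    Algebra.TensorProduct.tmul_mul_tmul]

lemma scalar_key (m n k p q : ℕ) (hq : q ≤ n) (hk : k ≤ n - q) (s : ℕ) (hs : s < k) :
    ((k.choose s : ℝ) *
        (((n - q - s).factorial : ℝ) / Real.Gamma ((m : ℝ) / 2 + p + k - s)) *
        (Real.Gamma ((m : ℝ) / 2 + p + k) / ((n - q - k).factorial : ℝ)))
      * (2 * ((k - s : ℕ) : ℝ) * (2 * ((k - s : ℕ) : ℝ) + 2 * p + m - 2))
    + ((k.choose (s+1) : ℝ) *
        (((n - q - (s+1)).factorial : ℝ) / Real.Gamma ((m : ℝ) / 2 + p + k - ((s+1:ℕ):ℝ))) *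
        (Real.Gamma ((m : ℝ) / 2 + p + k) / ((n - q - k).factorial : ℝ)))
      * (4 * ((s+1 : ℕ) : ℝ) * ((q : ℝ) - n - 1 + ((s+1 : ℕ) : ℝ))) = 0 := by
  have hks : ((k - s : ℕ) : ℝ) = (k : ℝ) - s := by
    rw [Nat.cast_sub hs.le]
  have hw : ((n - q - s : ℕ) : ℝ) = (n : ℝ) - q - s := by
    have h1 : n - q - s = n - (q + s) := by omega
    have h2 : q + s ≤ n := by omega
    rw [h1, Nat.cast_sub h2]; push_cast; ring
  have hwpos : 0 < n - q - s := by omega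
  have hfact : ((n - q - (s+1)).factorial : ℝ) * ((n:ℝ) - q - s) = ((n - q - s).factorial : ℝ) := by
    have h1 : n - q - s = (n - q - (s+1)) + 1 := by omega
    rw [← hw, h1, Nat.factorial_succ]
    push_cast; ring
  have hchoose : ((k.choose (s+1) : ℝ)) * (s+1) = (k.choose s : ℝ) * ((k:ℝ) - s) := by
    have := Nat.choose_succ_right_eq k s
    have h2 := congrArg (Nat.cast (R := ℝ)) this
    push_cast at h2
    rw [h2, Nat.cast_sub hs.le]
  set x : ℝ := (m : ℝ) / 2 + p + k - s - 1 with hxdef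
  have harg1 : (m : ℝ) / 2 + p + k - ((s+1:ℕ):ℝ) = x := by push_cast; ring
  have harg0 : (m : ℝ) / 2 + p + k - s = x + 1 := by rw [hxdef]; ring
  have hqn : (q : ℝ) - n - 1 + ((s+1 : ℕ):ℝ) = -((n:ℝ) - q - s) := by push_cast; ring
  rw [harg1, harg0, hqn, hks]
  have hxnonneg : 0 ≤ x := by
    have hks1 : (1:ℝ) ≤ (k:ℝ) - s := by
      have : (s:ℝ) + 1 ≤ k := by exact_mod_cast hs
      linarith
    have hp : 0 ≤ (p:ℝ) := Nat.cast_nonneg p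
    have hm : 0 ≤ (m:ℝ) := Nat.cast_nonneg m
    rw [hxdef]; linarith
  rcases eq_or_ne x 0 with hx0 | hx0
  · rw [hx0, Real.Gamma_zero]
    simp only [div_zero, mul_zero, zero_mul, add_zero]
    have h2x : 2 * ((k:ℝ) - s) + 2 * p + m - 2 = 2 * x := by rw [hxdef]; ring
    rw [h2x, hx0]
    ring
  · have hxpos : 0 < x := lt_of_le_of_ne hxnonneg (Ne.symm hx0)
    have hΓ : Real.Gamma x ≠ 0 := ne_of_gt (Real.Gamma_pos_of_pos hxpos)
    rw [Real.Gamma_add_one hx0]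
    have h2x : 2 * ((k:ℝ) - s) + 2 * p + m - 2 = 2 * x := by rw [hxdef]; ring
    rw [h2x]
    have hfk : ((n - q - k).factorial : ℝ) ≠ 0 := Nat.cast_ne_zero.mpr (Nat.factorial_ne_zero _)
    push_cast
    set G := Real.Gamma ((m : ℝ) / 2 + ↑p + ↑k) with hG
    set Gx := Real.Gamma x with hGx
    set c0 := (k.choose s : ℝ) with hc0
    set c1 := (k.choose (s+1) : ℝ) with hc1
    set F0 := ((n - q - s).factorial : ℝ) with hF0
    set F1 := ((n - q - (s+1)).factorial : ℝ) with hF1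
    set Fk := ((n - q - k).factorial : ℝ) with hFkd
    have key : c1 * ((s:ℝ)+1) * (F1 * ((n:ℝ)-q-s)) = c0 * ((k:ℝ)-s) * F0 := by
      rw [hfact]
      linear_combination F0 * hchoose
    have hA : c0 * (F0 / (x * Gx)) * (G / Fk) * (2 * ((k:ℝ) - ↑s) * (2 * x))
        = (4*G*c0*F0*((k:ℝ) - s)) * (Gx*Fk)⁻¹ := by
      field_simp
      ring
    have hB : c1 * (F1 / Gx) * (G / Fk) * (4 * ((s:ℝ) + 1) * (-((n:ℝ) - q - s)))
        = (-(4*G*c1*((s:ℝ)+1)*(F1*((n:ℝ) - q - s)))) * (Gx*Fk)⁻¹ := by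
      field_simp
    rw [hA, hB, ← add_mul]
    have hnum : (4*G*c0*F0*((k:ℝ) - s)) + (-(4*G*c1*((s:ℝ)+1)*(F1*((n:ℝ) - q - s)))) = 0 := by
      linear_combination (-(4*G)) * key
    rw [hnum, zero_mul]
/-- `f_{k,p,q} H_p^b H_q^f` is annihilated by the super Laplacian. -/
theorem fpoly_harmonic (m n k p q : ℕ) (hq : q ≤ n) (hk : k ≤ n - q)
    (Hb : MvPolynomial (Fin m) ℝ) (hHbdeg : Hb.IsHomogeneous p)
    (hHbharm : bLap m Hb = 0)
    (Hf : GrassAlg (2 * n)) (hHfdeg : fEuler (2 * n) Hf = (q : ℝ) • Hf)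
    (hHfharm : fLap n Hf = 0) :
    superLap m n (fpoly m n k p q * (Hb ⊗ₜ[ℝ] Hf)) = 0 := by
  have hbrr : (∑ i : Fin m, (X i : MvPolynomial (Fin m) ℝ) * X i) = bRR m := rfl
  rw [fpoly, Finset.sum_mul]
  simp only [smul_mul_assoc, hbrr, hT_mul]
  rw [map_sum]
  simp only [map_smul, superLap_tmul, bLap_bRR_pow hHbdeg hHbharm,
    fLap_theta_pow Hf hHfdeg hHfharm, TensorProduct.tmul_smul,
    smul_add, smul_smul, ← TensorProduct.smul_tmul']
  rw [Finset.sum_add_distrib, Finset.sum_range_succ, Finset.sum_range_succ']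
  rw [Nat.sub_self]
  simp only [Nat.cast_zero, mul_zero, zero_mul, zero_smul, add_zero, zero_add, smul_zero,
    TensorProduct.zero_tmul]
  rw [← Finset.sum_add_distrib]
  refine Finset.sum_eq_zero fun s hs => ?_
  have hs' : s < k := Finset.mem_range.mp hs
  have h1 : k - (s+1) = k - s - 1 := by omega
  have h2 : s + 1 - 1 = s := by omega
  rw [h1, h2, ← add_smul]
  exact smul_eq_zero_of_left (scalar_key m n k p q hq hk s hs') _

end
end

section
/- The combinatorial identity underlying the atypical branching rule holds: for M = m − 2n ∈ −2ℕ (m > 1) and 2 − M/2 ≤ k ≤ 2 − M, the multiset identity ⊕_{l=0}^{k+M/2-2} ⊕_{j=0}^{k-2l} (k−2l−j) = ⊕_{p=3-M-k}^{k} ⊕_{l=0}^{⌊p/2⌋} (p−2l) holds, i.e. for every q ≥ 0, the number of pairs (l,j) with 0 ≤ l ≤ k+M/2−2, 0 ≤ j ≤ k−2l, k−2l−j = q equals the number of pairs (p,l) with 3−M−k ≤ p ≤ k, 0 ≤ l ≤ ⌊p/2⌋, p−2l = q. -/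
open scoped TensorProduct
open MvPolynomial
set_option synthInstance.maxHeartbeats 1000000
set_option maxHeartbeats 1000000

noncomputable section

variable (m n : ℕ)

/-- the lattice-point count underlying the atypical branching rule.
For `M = m - 2n = -2t ∈ -2ℕ`, `m > 1` and `2 - M/2 ≤ k ≤ 2 - M`, for every `q` the
number of pairs `(l,j)` with `0 ≤ l ≤ k + M/2 - 2`, `0 ≤ j ≤ k - 2l` and
`k - 2l - j = q` equals the number of pairs `(p,l)` with `3 - M - k ≤ p ≤ k`,
`0 ≤ l ≤ ⌊p/2⌋` and `p - 2l = q`. -/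
theorem branching_lattice_count (m n t k : ℕ) (hm : 1 < m)
    (hM : (m : ℤ) - 2 * n = -2 * t)
    (hk1 : 2 + t ≤ k) (hk2 : k ≤ 2 + 2 * t) (q : ℕ) :
    ((Finset.range (k - t - 2 + 1) ×ˢ Finset.range (k + 1)).filter fun lj =>
        lj.2 ≤ k - 2 * lj.1 ∧ k = 2 * lj.1 + lj.2 + q).card =
      ((Finset.Icc (3 + 2 * t - k) k ×ˢ Finset.range (k + 1)).filter fun pl =>
        pl.2 ≤ pl.1 / 2 ∧ pl.1 = 2 * pl.2 + q).card := by
  refine Finset.card_bij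
    (fun lj _ => (((k - q) / 2 - lj.1) * 2 + q, (k - q) / 2 - lj.1)) ?_ ?_ ?_
  · rintro ⟨l, j⟩ h
    simp only [Finset.mem_filter, Finset.mem_product, Finset.mem_range,
      Finset.mem_Icc] at h ⊢
    omega
  · rintro ⟨l1, j1⟩ h1 ⟨l2, j2⟩ h2 e
    simp only [Finset.mem_filter, Finset.mem_product, Finset.mem_range,
      Prod.mk.injEq] at h1 h2 e ⊢
    omega
  · rintro ⟨p, l⟩ h
    simp only [Finset.mem_filter, Finset.mem_product, Finset.mem_range,
      Finset.mem_Icc] at h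
    refine ⟨((k - q) / 2 - l, k - 2 * ((k - q) / 2 - l) - q), ?_, ?_⟩
    · simp only [Finset.mem_filter, Finset.mem_product, Finset.mem_range]
      omega
    · simp only [Prod.mk.injEq]
      omega

end
end
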